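/- arXiv:math/0011016 — 2 statements merged into one kernel-verified Lean document; each statement's English description precedes it below -/
import Mathlib

section
/- Suppose a triangulated closed surface has angle data such that angles at each vertex sum to 2π. For each interior edge e shared by triangles t₁, t₂, with A^i the angle opposite e in t_i and B^i, C^i the other two angles of t_i, define θ^e = (π + A¹ - B¹ - C¹)/2 + (π + A² - B² - C²)/2. Then the sum over all edges incident to any fixed vertex v of (π - θ^e) equals 2π. -/
open Real

/-- Around a fixed vertex `v` of a triangulated closed surface whose angle data sums
to `2π` at each vertex, the quantities `π - θ^e` over the edges incident to `v`
(counted with multiplicity around the vertex) sum to `2π`.  The flower at `v`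
consists of `n` triangles arranged cyclically; triangle `i` has angle `a i` at `v`
and angles `b i`, `c i` at its other two vertices, with `b i` opposite the edge
shared with triangle `i+1` and `c i` opposite the edge shared with triangle `i-1`. -/
theorem sum_angle_defect_at_vertex (n : ℕ) [NeZero n] (a b c : ZMod n → ℝ)
    (hsum : ∑ i : ZMod n, a i = 2 * π) :
    ∑ i : ZMod n,
      (π - ((π + b i - c i - a i) / 2 + (π + c (i + 1) - b (i + 1) - a (i + 1)) / 2))
      = 2 * π := by
  have key : ∀ i : ZMod n,
      (π - ((π + b i - c i - a i) / 2 + (π + c (i + 1) - b (i + 1) - a (i + 1)) / 2))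
      = (a i + c i - b i) / 2 + (a (i + 1) + b (i + 1) - c (i + 1)) / 2 := by
    intro i; ring
  rw [Finset.sum_congr rfl (fun i _ => key i), Finset.sum_add_distrib]
  have hshift : ∑ i : ZMod n, (a (i + 1) + b (i + 1) - c (i + 1)) / 2
      = ∑ i : ZMod n, (a i + b i - c i) / 2 :=
    Fintype.sum_equiv (Equiv.addRight 1) _ _ (fun i => rfl)
  rw [hshift, ← Finset.sum_add_distrib]
  have : ∀ i : ZMod n, (a i + c i - b i) / 2 + (a i + b i - c i) / 2 = a i := by
    intro i; ring
  rw [Finset.sum_congr rfl (fun i _ => this i), hsum]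
end

section
/- The integral ∫_{[0,2π]³} ln(2|sin((θ₃-θ₂)/2)|) · f(θ₃) · ν(θ₁,θ₂,θ₃) dθ₁ dθ₂ dθ₃ = 0, where f is either sin or cos, and ν(θ₁,θ₂,θ₃) = |sin(θ₂-θ₁)+sin(θ₃-θ₂)+sin(θ₁-θ₃)|. -/
open Real

/-- Auxiliary integrand. -/
noncomputable def vanishKaux (f : ℝ → ℝ) (a b c : ℝ) : ℝ :=
  Real.log (2 * |Real.sin ((c - b) / 2)|) * f c *
    |Real.sin (b - a) + Real.sin (c - b) + Real.sin (a - c)|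

/-- Shifting a `2π`-periodic function by `π` does not change its integral over `[0, 2π]`. -/
lemma vanish_shift_pi (g : ℝ → ℝ) (hg : ∀ x, g (x + 2 * π) = g x) :
    ∫ x in (0:ℝ)..(2 * π), g x = ∫ x in (0:ℝ)..(2 * π), g (x + π) := by
  rw [intervalIntegral.integral_comp_add_right g π]
  have h := Function.Periodic.intervalIntegral_add_eq (f := g) (T := 2 * π) hg 0 π
  rw [zero_add] at h
  rw [show (2 * π + π : ℝ) = π + 2 * π by ring, zero_add]
  exact h

lemma vanishKaux_per3 (f : ℝ → ℝ) (hf2 : ∀ x, f (x + 2 * π) = f x) (a b c : ℝ) :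
    vanishKaux f a b (c + 2 * π) = vanishKaux f a b c := by
  unfold vanishKaux
  rw [show ((c + 2 * π - b) / 2 : ℝ) = (c - b) / 2 + π by ring, Real.sin_add_pi, abs_neg,
    show (c + 2 * π - b : ℝ) = (c - b) + 2 * π by ring, Real.sin_add_two_pi,
    show (a - (c + 2 * π) : ℝ) = (a - c) - 2 * π by ring, Real.sin_sub_two_pi, hf2]

lemma vanishKaux_per2 (f : ℝ → ℝ) (a b c : ℝ) :
    vanishKaux f a (b + 2 * π) c = vanishKaux f a b c := by
  unfold vanishKaux
  rw [show ((c - (b + 2 * π)) / 2 : ℝ) = (c - b) / 2 - π by ring, Real.sin_sub_pi, abs_neg,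
    show (b + 2 * π - a : ℝ) = (b - a) + 2 * π by ring, Real.sin_add_two_pi,
    show (c - (b + 2 * π) : ℝ) = (c - b) - 2 * π by ring, Real.sin_sub_two_pi]

lemma vanishKaux_per1 (f : ℝ → ℝ) (a b c : ℝ) :
    vanishKaux f (a + 2 * π) b c = vanishKaux f a b c := by
  unfold vanishKaux
  rw [show (b - (a + 2 * π) : ℝ) = (b - a) - 2 * π by ring, Real.sin_sub_two_pi,
    show (a + 2 * π - c : ℝ) = (a - c) + 2 * π by ring, Real.sin_add_two_pi]

lemma vanishKaux_neg (f : ℝ → ℝ) (hfπ : ∀ x, f (x + π) = -f x) (a b c : ℝ) :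
    vanishKaux f (a + π) (b + π) (c + π) = -vanishKaux f a b c := by
  unfold vanishKaux
  rw [show (c + π - (b + π) : ℝ) = c - b by ring,
    show (b + π - (a + π) : ℝ) = b - a by ring,
    show (a + π - (c + π) : ℝ) = a - c by ring, hfπ]
  ring

/-- The integral `∫_{[0,2π]³} ln(2|sin((θ₃-θ₂)/2)|)·f(θ₃)·ν(θ₁,θ₂,θ₃) dθ` vanishes,
where `f` is either `sin` or `cos` and
`ν(θ₁,θ₂,θ₃) = |sin(θ₂-θ₁)+sin(θ₃-θ₂)+sin(θ₁-θ₃)|`. -/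
theorem vanishing_log_sin_integral (f : ℝ → ℝ) (hf : f = Real.sin ∨ f = Real.cos) :
    (∫ θ₁ in (0:ℝ)..(2 * π), ∫ θ₂ in (0:ℝ)..(2 * π), ∫ θ₃ in (0:ℝ)..(2 * π),
      Real.log (2 * |Real.sin ((θ₃ - θ₂) / 2)|) * f θ₃ *
        |Real.sin (θ₂ - θ₁) + Real.sin (θ₃ - θ₂) + Real.sin (θ₁ - θ₃)|) = 0 := by
  have hf2 : ∀ x, f (x + 2 * π) = f x := by
    rcases hf with rfl | rfl <;> intro x
    · exact Real.sin_add_two_pi x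
    · exact Real.cos_add_two_pi x
  have hfπ : ∀ x, f (x + π) = -f x := by
    rcases hf with rfl | rfl <;> intro x
    · exact Real.sin_add_pi x
    · exact Real.cos_add_pi x
  have hgoal : (∫ θ₁ in (0:ℝ)..(2 * π), ∫ θ₂ in (0:ℝ)..(2 * π), ∫ θ₃ in (0:ℝ)..(2 * π),
      Real.log (2 * |Real.sin ((θ₃ - θ₂) / 2)|) * f θ₃ *
        |Real.sin (θ₂ - θ₁) + Real.sin (θ₃ - θ₂) + Real.sin (θ₁ - θ₃)|) =
      ∫ a in (0:ℝ)..(2 * π), ∫ b in (0:ℝ)..(2 * π), ∫ c in (0:ℝ)..(2 * π),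
        vanishKaux f a b c := rfl
  rw [hgoal]
  set I : ℝ := ∫ a in (0:ℝ)..(2 * π), ∫ b in (0:ℝ)..(2 * π), ∫ c in (0:ℝ)..(2 * π),
    vanishKaux f a b c with hI
  have step3 : ∀ a b, (∫ c in (0:ℝ)..(2 * π), vanishKaux f a b c) =
      ∫ c in (0:ℝ)..(2 * π), vanishKaux f a b (c + π) :=
    fun a b => vanish_shift_pi _ (fun x => vanishKaux_per3 f hf2 a b x)
  have step2 : ∀ a, (∫ b in (0:ℝ)..(2 * π), ∫ c in (0:ℝ)..(2 * π),
        vanishKaux f a b (c + π)) =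
      ∫ b in (0:ℝ)..(2 * π), ∫ c in (0:ℝ)..(2 * π), vanishKaux f a (b + π) (c + π) :=
    fun a => vanish_shift_pi (fun b => ∫ c in (0:ℝ)..(2 * π), vanishKaux f a b (c + π))
      (fun x => by simp only [vanishKaux_per2])
  have step1 : (∫ a in (0:ℝ)..(2 * π), ∫ b in (0:ℝ)..(2 * π), ∫ c in (0:ℝ)..(2 * π),
        vanishKaux f a (b + π) (c + π)) =
      ∫ a in (0:ℝ)..(2 * π), ∫ b in (0:ℝ)..(2 * π), ∫ c in (0:ℝ)..(2 * π),
        vanishKaux f (a + π) (b + π) (c + π) :=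
    vanish_shift_pi
      (fun a => ∫ b in (0:ℝ)..(2 * π), ∫ c in (0:ℝ)..(2 * π), vanishKaux f a (b + π) (c + π))
      (fun x => by simp only [vanishKaux_per1])
  have key : I = -I := by
    calc I = ∫ a in (0:ℝ)..(2 * π), ∫ b in (0:ℝ)..(2 * π), ∫ c in (0:ℝ)..(2 * π),
          vanishKaux f a b (c + π) := by rw [hI]; simp only [step3]
      _ = ∫ a in (0:ℝ)..(2 * π), ∫ b in (0:ℝ)..(2 * π), ∫ c in (0:ℝ)..(2 * π),
          vanishKaux f a (b + π) (c + π) := by simp only [step2]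
      _ = ∫ a in (0:ℝ)..(2 * π), ∫ b in (0:ℝ)..(2 * π), ∫ c in (0:ℝ)..(2 * π),
          vanishKaux f (a + π) (b + π) (c + π) := step1
      _ = -I := by
          rw [hI]
          simp only [vanishKaux_neg f hfπ, intervalIntegral.integral_neg]
  linarith
end
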